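/- Let B be a cocommutative Hopf algebra, L a normalized commuting 2-cocycle and σ = L∘(id⊗S)∘Δ. Then σ∘S = σ. -/

import Mathlib

open TensorProduct Coalgebra

variable {B : Type} [Ring B] [HopfAlgebra ℂ B]

/-- The comultiplication `Λ = (id ⊗ τ ⊗ id) ∘ (Δ ⊗ Δ)` of `B ⊗ B`. -/
noncomputable def Lam : B ⊗[ℂ] B →ₗ[ℂ] (B ⊗[ℂ] B) ⊗[ℂ] (B ⊗[ℂ] B) :=
  (TensorProduct.tensorTensorTensorComm ℂ B B B B).toLinearMap ∘ₗ
    TensorProduct.map (comul (R := ℂ)) (comul (R := ℂ))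

/-- Convolution of linear functionals w.r.t. a given comultiplication. -/
noncomputable def convWith {M : Type} [AddCommGroup M] [Module ℂ M]
    (Δ : M →ₗ[ℂ] M ⊗[ℂ] M) (φ ψ : M →ₗ[ℂ] ℂ) : M →ₗ[ℂ] ℂ :=
  LinearMap.mul' ℂ ℂ ∘ₗ TensorProduct.map φ ψ ∘ₗ Δ

/-- Convolution powers `φ^{⋆n}` w.r.t. a comultiplication `Δ` and counit `ε` (the 0-th
power being the counit). -/
noncomputable def convPowWith {M : Type} [AddCommGroup M] [Module ℂ M]
    (Δ : M →ₗ[ℂ] M ⊗[ℂ] M) (ε : M →ₗ[ℂ] ℂ) (φ : M →ₗ[ℂ] ℂ) : ℕ → (M →ₗ[ℂ] ℂ)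
  | 0 => ε
  | n + 1 => convWith Δ φ (convPowWith Δ ε φ n)

/-- The counit `δ ⊗ δ` of `B ⊗ B`. -/
noncomputable def counit2 : B ⊗[ℂ] B →ₗ[ℂ] ℂ :=
  LinearMap.mul' ℂ ℂ ∘ₗ TensorProduct.map (counit (R := ℂ)) (counit (R := ℂ))

/-- `L ⋆ μ = (L ⊗ μ) ∘ Λ : B ⊗ B → B`. -/
noncomputable def LconvMu (L : B ⊗[ℂ] B →ₗ[ℂ] ℂ) : B ⊗[ℂ] B →ₗ[ℂ] B :=
  (TensorProduct.lid ℂ B).toLinearMap ∘ₗ TensorProduct.map L (LinearMap.mul' ℂ B) ∘ₗ Lam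

/-- `μ ⋆ L = (μ ⊗ L) ∘ Λ : B ⊗ B → B`. -/
noncomputable def MuConvL (L : B ⊗[ℂ] B →ₗ[ℂ] ℂ) : B ⊗[ℂ] B →ₗ[ℂ] B :=
  (TensorProduct.rid ℂ B).toLinearMap ∘ₗ TensorProduct.map (LinearMap.mul' ℂ B) L ∘ₗ Lam

/-- `σ = L ∘ (id ⊗ S) ∘ Δ : B → ℂ`. -/
noncomputable def sigma (L : B ⊗[ℂ] B →ₗ[ℂ] ℂ) : B →ₗ[ℂ] ℂ :=
  L ∘ₗ TensorProduct.map LinearMap.id (HopfAlgebra.antipode (R := ℂ)) ∘ₗ comul (R := ℂ)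

/-! In a cocommutative Hopf algebra the antipode is a coalgebra map and an involution, both
because a convolution inverse is unique: `(S ⊗ S) ∘ Δ` and `S ∘ S` are left inverses of `Δ` and
`S`, whose right inverses are `Δ ∘ S` and `id`. Hence `σ ∘ S = L ∘ (S ⊗ id) ∘ Δ`. That this equals
`σ` holds in any Hopf algebra: sum the cocycle identity over `(x₁, S x₂, x₃)`; the outer terms
give the two functionals, and the inner ones vanish by normalization since
`x₁ S(x₂) ⊗ x₃ = 1 ⊗ x` and `S(x₁) x₂ = ε(x) 1`. -/

open HopfAlgebra WithConv LinearMap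
open Algebra.TensorProduct (includeLeft includeRight)

lemma TensorProduct.map_convOne_convOne {R C D A A' : Type*} [CommSemiring R]
    [AddCommMonoid C] [Module R C] [Coalgebra R C] [AddCommMonoid D] [Module R D]
    [Coalgebra R D] [Semiring A] [Algebra R A] [Semiring A'] [Algebra R A'] :
    toConv (map (1 : WithConv (C →ₗ[R] A)).ofConv (1 : WithConv (D →ₗ[R] A')).ofConv) = 1 := by
  ext c d
  simp [LinearMap.convOne_def, Algebra.algebraMap_eq_smul_one, Algebra.TensorProduct.one_def,
    ← smul_tmul', smul_smul, mul_comm]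

namespace HopfAlgebra

section Cocommutative
variable {R A : Type*} [CommSemiring R] [Semiring A] [HopfAlgebra R A] [IsCocomm R A]

/-- Cocommutativity makes `Δ` a coalgebra map, so precomposing with it respects convolution. -/
lemma map_antipode_comp_comul_convMul_comul :
    toConv (map (antipode R) (antipode R) ∘ₗ comul) * toConv (comul (R := R) (A := A)) = 1 := by
  calc toConv (map (antipode R) (antipode R) ∘ₗ comul) * toConv (comul (R := R) (A := A))
      = toConv ((toConv (map (antipode R) (antipode R)) * toConv (map LinearMap.id LinearMap.id)
          : WithConv (A ⊗[R] A →ₗ[R] A ⊗[R] A)).ofConv ∘ₗ (comulCoalgHom R A).toLinearMap) := by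
        rw [convMul_comp_coalgHom_distrib, map_id]; rfl
    _ = toConv ((1 : WithConv (A ⊗[R] A →ₗ[R] A ⊗[R] A)).ofConv ∘ₗ
          (comulCoalgHom R A).toLinearMap) := by
        rw [← ofConv_toConv (antipode R), ← ofConv_toConv LinearMap.id, map_convMul_map,
          antipode_mul_id, TensorProduct.map_convOne_convOne]
    _ = 1 := by
        rw [LinearMap.convOne_def, ofConv_toConv, comp_assoc, (comulCoalgHom R A).counit_comp]
        rfl

lemma comul_comp_antipode :
    comul ∘ₗ antipode R = map (antipode R) (antipode R) ∘ₗ (comul (R := R) (A := A)) :=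
  congr(ofConv $(left_inv_eq_right_inv map_antipode_comp_comul_convMul_comul
    comul_right_inv)).symm

lemma antipode_comp_antipode_convMul_antipode :
    toConv (antipode R ∘ₗ antipode R) * toConv (antipode R (A := A)) = 1 := by
  ext x
  have h := congr($(antipode_comp_mul_comp_comm (R := R) (A := A))
    (map (antipode R) LinearMap.id (comul x)))
  calc (toConv (antipode R ∘ₗ antipode R) * toConv (antipode R) : WithConv (A →ₗ[R] A)) x
      = antipode R (mul' R A (TensorProduct.comm R A A
          (map (antipode R) LinearMap.id (comul x)))) := by
        simpa [map_map] using h.symm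
    _ = antipode R ((toConv LinearMap.id * toConv (antipode R) : WithConv (A →ₗ[R] A)) x) := by
        rw [← map_comm, comm_comul]; rfl
    _ = (1 : WithConv (A →ₗ[R] A)) x := by
        simp [Algebra.algebraMap_eq_smul_one]

lemma antipode_comp_antipode : antipode R ∘ₗ antipode R = (LinearMap.id : A →ₗ[R] A) :=
  congr(ofConv $(left_inv_eq_right_inv antipode_comp_antipode_convMul_antipode
    (antipode_mul_id (R := R) (C := A))))

end Cocommutative

variable {R A : Type*} [CommSemiring R] [Semiring A] [HopfAlgebra R A]

lemma map_antipode_id_comp_comul_eq_convMul :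
    toConv (map (antipode R) LinearMap.id ∘ₗ comul) =
      toConv ((includeLeft (R := R) (S := R) (B := A)).toLinearMap ∘ₗ antipode R) *
        toConv (includeRight (R := R) (A := A)).toLinearMap := by
  have : mul' R (A ⊗[R] A) ∘ₗ map ((includeLeft (R := R) (S := R) (B := A)).toLinearMap ∘ₗ
      antipode R) includeRight.toLinearMap = map (antipode R) LinearMap.id := by
    ext a b; simp
  rw [LinearMap.convMul_def, ← comp_assoc, this]

lemma includeLeft_convMul_map_antipode_id_comp_comul :
    toConv (includeLeft (R := R) (S := R) (B := A)).toLinearMap *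
        toConv (map (antipode R) LinearMap.id ∘ₗ comul) =
      toConv (includeRight (R := R) (A := A)).toLinearMap := by
  have h : toConv (includeLeft (R := R) (S := R) (B := A)).toLinearMap *
      toConv ((includeLeft (R := R) (S := R) (B := A)).toLinearMap ∘ₗ antipode R (A := A)) = 1 := by
    have := algHom_comp_convMul_distrib (includeLeft (R := R) (S := R) (B := A))
      (toConv LinearMap.id) (toConv (antipode R (A := A)))
    simp only [id_mul_antipode, comp_id] at this
    apply ofConv_injective
    rw [← this]
    ext x
    simp
  rw [map_antipode_id_comp_comul_eq_convMul, ← mul_assoc, h, one_mul]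

end HopfAlgebra

def IsHochschildTwoCocycle {R A : Type*} [CommRing R] [Semiring A] [Bialgebra R A]
    (L : A ⊗[R] A →ₗ[R] R) : Prop :=
  ∀ a b c : A, counit (R := R) a * L (b ⊗ₜ c) - L ((a * b) ⊗ₜ c) + L (a ⊗ₜ (b * c))
    - L (a ⊗ₜ b) * counit (R := R) c = 0

namespace IsHochschildTwoCocycle

section Bialgebra
variable {R A : Type*} [CommRing R] [Semiring A] [Bialgebra R A] {L : A ⊗[R] A →ₗ[R] R}

lemma apply_tmul_one (hL : IsHochschildTwoCocycle L) (hnorm : L (1 ⊗ₜ 1) = 0) (b : A) :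
    L (b ⊗ₜ 1) = 0 := by
  simpa [hnorm] using hL b 1 1

lemma apply_one_tmul (hL : IsHochschildTwoCocycle L) (hnorm : L (1 ⊗ₜ 1) = 0) (c : A) :
    L (1 ⊗ₜ c) = 0 := by
  simpa [hnorm] using hL 1 1 c

end Bialgebra

variable {R A : Type*} [CommRing R] [Semiring A] [HopfAlgebra R A] {L : A ⊗[R] A →ₗ[R] R}

lemma counit_mul_apply_map_antipode_id_comul (hL : IsHochschildTwoCocycle L)
    (hnorm : L (1 ⊗ₜ 1) = 0) (a y : A) :
    counit (R := R) a * L (map (antipode R) LinearMap.id (comul y)) =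
      L ((a ⊗ₜ 1) * map (antipode R) LinearMap.id (comul y)) + L (a ⊗ₜ antipode R y) := by
  set ρ := ℛ R y
  have hsum := Finset.sum_eq_zero fun i (_ : i ∈ ρ.index) =>
    hL a (antipode R (ρ.left i)) (ρ.right i)
  have h₁ : ∑ i ∈ ρ.index, L (antipode R (ρ.left i) ⊗ₜ ρ.right i) =
      L (map (antipode R) LinearMap.id (comul y)) := by
    simp [← ρ.eq]
  have h₂ : ∑ i ∈ ρ.index, L ((a * antipode R (ρ.left i)) ⊗ₜ ρ.right i) =
      L ((a ⊗ₜ 1) * map (antipode R) LinearMap.id (comul y)) := by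
    simp [← ρ.eq, Finset.mul_sum]
  have h₃ : ∑ i ∈ ρ.index, L (a ⊗ₜ (antipode R (ρ.left i) * ρ.right i)) = 0 := by
    simp [← map_sum, ← tmul_sum, sum_antipode_mul_eq_smul, hL.apply_tmul_one hnorm]
  have h₄ : ∑ i ∈ ρ.index, L (a ⊗ₜ antipode R (ρ.left i)) * counit (R := R) (ρ.right i) =
      L (a ⊗ₜ antipode R y) := by
    simpa using congr(mul' R R $(sum_map_tmul_counit_eq
      (L ∘ₗ TensorProduct.mk R A A a ∘ₗ antipode R) y (repr := ρ)))
  simp only [Finset.sum_add_distrib, Finset.sum_sub_distrib, ← Finset.mul_sum,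
    h₁, h₂, h₃, h₄] at hsum
  linear_combination hsum

theorem comp_map_antipode_id_comp_comul (hL : IsHochschildTwoCocycle L)
    (hnorm : L (1 ⊗ₜ 1) = 0) :
    L ∘ₗ map (antipode R) LinearMap.id ∘ₗ comul = L ∘ₗ map LinearMap.id (antipode R) ∘ₗ comul := by
  ext x
  set ρ := ℛ R x
  have hsum := Finset.sum_congr rfl fun i (_ : i ∈ ρ.index) =>
    hL.counit_mul_apply_map_antipode_id_comul hnorm (ρ.left i) (ρ.right i)
  have h₁ : ∑ i ∈ ρ.index, counit (R := R) (ρ.left i) *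
      L (map (antipode R) LinearMap.id (comul (ρ.right i))) =
      L (map (antipode R) LinearMap.id (comul x)) := by
    simpa using congr(mul' R R $(sum_counit_tmul_map_eq
      (L ∘ₗ map (antipode R) LinearMap.id ∘ₗ comul) x (repr := ρ)))
  have h₂ : ∑ i ∈ ρ.index, L ((ρ.left i ⊗ₜ 1) * map (antipode R) LinearMap.id (comul (ρ.right i)))
      = 0 := by
    have := congr(L ($(includeLeft_convMul_map_antipode_id_comp_comul (R := R) (A := A)) x))
    simpa [← ρ.eq, hL.apply_one_tmul hnorm] using this
  have h₃ : ∑ i ∈ ρ.index, L (ρ.left i ⊗ₜ antipode R (ρ.right i)) =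
      L (map LinearMap.id (antipode R) (comul x)) := by
    simp [← ρ.eq]
  simpa [Finset.sum_add_distrib, h₁, h₂, h₃] using hsum

end IsHochschildTwoCocycle

theorem stmt18_general
    (hcocomm : (TensorProduct.comm ℂ B B).toLinearMap ∘ₗ comul (R := ℂ)
      = comul (R := ℂ) (A := B))
    (L : B ⊗[ℂ] B →ₗ[ℂ] ℂ)
    (hnorm : L (1 ⊗ₜ[ℂ] 1) = 0)
    (hcocycle : ∀ a b c : B,
      counit (R := ℂ) a * L (b ⊗ₜ[ℂ] c) - L ((a * b) ⊗ₜ[ℂ] c)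
        + L (a ⊗ₜ[ℂ] (b * c)) - L (a ⊗ₜ[ℂ] b) * counit (R := ℂ) c = 0) :
    sigma L ∘ₗ HopfAlgebra.antipode (R := ℂ) = sigma L := by
  have : IsCocomm ℂ B := ⟨hcocomm⟩
  calc sigma L ∘ₗ antipode ℂ = L ∘ₗ map (antipode ℂ) LinearMap.id ∘ₗ comul := by
        rw [sigma, comp_assoc, comp_assoc, comul_comp_antipode, ← comp_assoc comul,
          ← map_comp, antipode_comp_antipode, id_comp]
    _ = sigma L := IsHochschildTwoCocycle.comp_map_antipode_id_comp_comul hcocycle hnorm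

/-- Let `B` be a cocommutative Hopf algebra (`Δ = τ ∘ Δ`), `L` a normalized commuting
2-cocycle and `σ = L ∘ (id ⊗ S) ∘ Δ`.  Then `σ ∘ S = σ`. -/
theorem stmt18
    (hcocomm : (TensorProduct.comm ℂ B B).toLinearMap ∘ₗ comul (R := ℂ)
      = comul (R := ℂ) (A := B))
    (L : B ⊗[ℂ] B →ₗ[ℂ] ℂ)
    (hnorm : L (1 ⊗ₜ[ℂ] 1) = 0)
    (hcomm : LconvMu L = MuConvL L)
    (hcocycle : ∀ a b c : B,
      counit (R := ℂ) a * L (b ⊗ₜ[ℂ] c) - L ((a * b) ⊗ₜ[ℂ] c)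
        + L (a ⊗ₜ[ℂ] (b * c)) - L (a ⊗ₜ[ℂ] b) * counit (R := ℂ) c = 0) :
    sigma L ∘ₗ HopfAlgebra.antipode (R := ℂ) = sigma L :=
  stmt18_general hcocomm L hnorm hcocycle
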